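/- Let n ≥ 2 be an integer. If there is no 2-design of index 1 in C_{n−1} ≀ S_n, then there is no projective plane of order n−1 or there is no projective plane of order n. Equivalently: if there exist a projective plane of order n−1 and a projective plane of order n, then there exists a 2-design of index 1 in C_{n−1} ≀ S_n. -/
import Mathlib


/-- The monoid hom `Perm (Fin n) →* MulAut (Fin n → G)`, permuting coordinates. -/
def permMulAut (G : Type*) [CommGroup G] (n : ℕ) :
    Equiv.Perm (Fin n) →* MulAut (Fin n → G) where
  toFun π := MulEquiv.arrowCongr π (MulEquiv.refl G)
  map_one' := by ext f a; rfl
  map_mul' := by intro π σ; ext f a; rfl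

/-- The wreath product `G ≀ Sₙ`. -/
abbrev Wr (G : Type*) [CommGroup G] (n : ℕ) :=
  SemidirectProduct (Fin n → G) (Equiv.Perm (Fin n)) (permMulAut G n)

/-- The natural action of `G ≀ Sₙ` on `G × [n]`. -/
def wAct {G : Type*} [CommGroup G] {n : ℕ} (w : Wr G n) (p : G × Fin n) : G × Fin n :=
  (p.1 * w.left (w.right p.2), w.right p.2)

/-- The `i`-th largest part of a multiset of naturals (0-indexed; `0` beyond the last part). -/
def dparts (s : Multiset ℕ) (i : ℕ) : ℕ := ((s.sort (· ≤ ·)).reverse).getD i 0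

/-- `s` is dominated by `t`. -/
def msDom (s t : Multiset ℕ) : Prop :=
  ∀ k, (((s.sort (· ≤ ·)).reverse).take k).sum ≤ (((t.sort (· ≤ ·)).reverse).take k).sum

/-- `T` is a `(σ,ρ)`-tabloid: the first component assigns to each element of `[n]` a block
(`Sum.inl i` is the block of the `i+1`-st largest part of `σ`, `Sum.inr j` that of `ρ`),
blocks have the prescribed sizes, and the colouring (second component)
is normalised to `1` on the `ρ`-blocks. -/
def IsTabloid (G : Type*) [CommGroup G] (n : ℕ) (σ ρ : Multiset ℕ)
    (T : (Fin n → ℕ ⊕ ℕ) × (Fin n → G)) : Prop :=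
  (∀ i, Nat.card {a : Fin n // T.1 a = Sum.inl i} = dparts σ i) ∧
  (∀ j, Nat.card {a : Fin n // T.1 a = Sum.inr j} = dparts ρ j) ∧
  (∀ a j, T.1 a = Sum.inr j → T.2 a = 1)

/-- The action of the wreath product on (raw) tabloids. -/
def tabAct {G : Type*} [CommGroup G] {n : ℕ} (w : Wr G n)
    (T : (Fin n → ℕ ⊕ ℕ) × (Fin n → G)) : (Fin n → ℕ ⊕ ℕ) × (Fin n → G) :=
  ⟨fun a => T.1 (w.right⁻¹ a),
   fun a => match T.1 (w.right⁻¹ a) with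
     | Sum.inl _ => T.2 (w.right⁻¹ a) * w.left a
     | Sum.inr _ => 1⟩

/-- A subset `Y` of `W` is transitive on `S ⊆ Ω` (w.r.t. an action `act`): there is a
constant `c > 0` such that any `a ∈ S` is mapped to any `b ∈ S` by exactly `c` elements of `Y`. -/
def IsTransitiveOn {W Ω : Type*} (act : W → Ω → Ω) (S : Set Ω) (Y : Set W) : Prop :=
  ∃ c : ℕ, 0 < c ∧ ∀ a ∈ S, ∀ b ∈ S, Nat.card {y : W // y ∈ Y ∧ act y a = b} = c

/-- `Y ⊆ G ≀ Sₙ` is `(σ,ρ)`-transitive. -/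
def DPTransitive (G : Type*) [CommGroup G] (n : ℕ) (σ ρ : Multiset ℕ)
    (Y : Set (Wr G n)) : Prop :=
  IsTransitiveOn tabAct {T | IsTabloid G n σ ρ T} Y

/-- `(σ,ρ) ≽_G (τ,π)` : every `(σ,ρ)`-transitive subset of `G ≀ Sₙ` is `(τ,π)`-transitive. -/
def DPDom (G : Type*) [CommGroup G] (n : ℕ) (σ ρ τ π : Multiset ℕ) : Prop :=
  ∀ Y : Set (Wr G n), DPTransitive G n σ ρ Y → DPTransitive G n τ π Y

/-- The partition obtained by adding `k` to the `r`-th largest part (1-indexed). -/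
def addPart (s : Multiset ℕ) (r k : ℕ) : Multiset ℕ :=
  s.erase (dparts s (r - 1)) + {dparts s (r - 1) + k}

/-- `θ(w)`: the number of fixed points of `w` on `C_r × [n]`, divided by `r`. -/
noncomputable def theta {r n : ℕ} (w : Wr (Multiplicative (ZMod r)) n) : ℕ :=
  Nat.card {p : Multiplicative (ZMod r) × Fin n // wAct w p = p} / r

/-- The Charlier polynomial `C_k^{(a)}(x) = ∑_{j=0}^k (-1)^{k-j} binom(k,j) a^{-j} (x)_j`. -/
noncomputable def charlier (a : ℝ) (k : ℕ) (x : ℝ) : ℝ :=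
  ∑ j ∈ Finset.range (k + 1),
    (-1 : ℝ) ^ (k - j) * (k.choose j : ℝ) * a⁻¹ ^ j * ∏ m ∈ Finset.range j, (x - m)

/-- `Y` is a `t`-design in `C_r ≀ Sₙ`: it is transitive on `t`-tuples of elements of
`C_r × [n]` with pairwise distinct second coordinates. -/
def IsTDesign (r n t : ℕ) (Y : Set (Wr (Multiplicative (ZMod r)) n)) : Prop :=
  IsTransitiveOn (fun w v => fun s => wAct w (v s))
    {v : Fin t → Multiplicative (ZMod r) × Fin n | Function.Injective fun s => (v s).2} Y

/-- `Y` is a `d`-code in `C_r ≀ Sₙ` : `θ(x⁻¹y) ≤ n - d` for all distinct `x, y ∈ Y`. -/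
def IsDCode (r n d : ℕ) (Y : Set (Wr (Multiplicative (ZMod r)) n)) : Prop :=
  ∀ x ∈ Y, ∀ y ∈ Y, x ≠ y → (theta (x⁻¹ * y) : ℤ) ≤ (n : ℤ) - d


/-- `Y` is a `t`-design of index 1 in `C_r ≀ Sₙ`: every `t`-tuple of elements of
`C_r × [n]` with pairwise distinct second coordinates is mapped to every other such
tuple by exactly one element of `Y`. -/
def IsSharpTDesign (r n t : ℕ) (Y : Set (Wr (Multiplicative (ZMod r)) n)) : Prop :=
  ∀ a ∈ {v : Fin t → Multiplicative (ZMod r) × Fin n | Function.Injective fun s => (v s).2},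
    ∀ b ∈ {v : Fin t → Multiplicative (ZMod r) × Fin n | Function.Injective fun s => (v s).2},
      Nat.card {y : Wr (Multiplicative (ZMod r)) n //
        y ∈ Y ∧ (fun s => wAct y (a s)) = b} = 1

/-- There exists a (finite) projective plane of order `m`. -/
def ExistsProjectivePlaneOfOrder (m : ℕ) : Prop :=
  ∃ (P L : Type) (mem : Membership P L) (h : @Configuration.ProjectivePlane P L mem),
    Finite P ∧ Finite L ∧ @Configuration.ProjectivePlane.order P L mem h = m


section AuxPlane

open Configuration Configuration.ProjectivePlane

variable {P L : Type} [Membership P L] [Configuration.ProjectivePlane P L] [Finite P] [Finite L]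

omit [Finite P] [Finite L] in
private lemma line_eq_of {p q : P} {l m : L} (hpq : p ≠ q)
    (h1 : p ∈ l) (h2 : q ∈ l) (h3 : p ∈ m) (h4 : q ∈ m) : l = m :=
  (Configuration.Nondegenerate.eq_or_eq h1 h2 h3 h4).resolve_left hpq

omit [Finite P] [Finite L] in
private lemma point_eq_of {p q : P} {l m : L} (hlm : l ≠ m)
    (h1 : p ∈ l) (h2 : p ∈ m) (h3 : q ∈ l) (h4 : q ∈ m) : p = q :=
  (Configuration.Nondegenerate.eq_or_eq h1 h3 h2 h4).resolve_right hlm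

private lemma card_points_on_line' (l : L) :
    Nat.card {p : P // p ∈ l} = Configuration.ProjectivePlane.order P L + 1 :=
  Configuration.ProjectivePlane.pointCount_eq P l

private lemma card_lines_through_ne (p : P) (l : L) (hp : p ∈ l) :
    Nat.card {m : L // p ∈ m ∧ m ≠ l} = Configuration.ProjectivePlane.order P L := by
  classical
  have key : Nat.card {m : L // p ∈ m} = Configuration.ProjectivePlane.order P L + 1 :=
    Configuration.ProjectivePlane.lineCount_eq L p
  haveI : Fintype {m : L // p ∈ m} := Fintype.ofFinite _
  haveI : Fintype {m : L // p ∈ m ∧ m ≠ l} := Fintype.ofFinite _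
  have e : Option {m : L // p ∈ m ∧ m ≠ l} ≃ {m : L // p ∈ m} := by
    refine (Equiv.optionCongr ?_).trans (Equiv.optionSubtypeNe (⟨l, hp⟩ : {m : L // p ∈ m}))
    exact { toFun := fun m => ⟨⟨m.1, m.2.1⟩, fun h => m.2.2 (congrArg Subtype.val h)⟩
            invFun := fun x => ⟨x.1.1, x.1.2, fun h => x.2 (Subtype.ext h)⟩
            left_inv := fun m => rfl
            right_inv := fun x => rfl }
  have hcard := Fintype.card_congr e
  rw [Fintype.card_option] at hcard
  rw [Nat.card_eq_fintype_card] at key ⊢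
  omega

end AuxPlane

/-- A sharply 2-transitive set of permutations of `Fin n` from a projective plane of order `n`. -/
private lemma exists_sharp_perms (n : ℕ) (h : ExistsProjectivePlaneOfOrder n) :
    ∃ S : Set (Equiv.Perm (Fin n)), ∀ i1 i2 : Fin n, i1 ≠ i2 → ∀ j1 j2 : Fin n, j1 ≠ j2 →
      ∃! π : Equiv.Perm (Fin n), π ∈ S ∧ π i1 = j1 ∧ π i2 = j2 := by
  classical
  obtain ⟨P, L, mem, pp, fP, fL, horder⟩ := h
  letI := mem; letI := pp; haveI := fP; haveI := fL
  obtain ⟨p₁, p₂, p₃, l₁, l₂, l₃, h₁₂, h₁₃, h₂₁, h₂₂, h₂₃, h₃₁, h₃₂, h₃₃⟩ :=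
    @Configuration.ProjectivePlane.exists_config P L _ _
  have hp23 : p₂ ≠ p₃ := fun h => h₃₃ (h ▸ h₂₃)
  haveI : Fintype {m : L // p₂ ∈ m ∧ m ≠ l₂} := Fintype.ofFinite _
  haveI : Fintype {m : L // p₃ ∈ m ∧ m ≠ l₂} := Fintype.ofFinite _
  have cXp : Fintype.card {m : L // p₂ ∈ m ∧ m ≠ l₂} = n := by
    rw [← Nat.card_eq_fintype_card, card_lines_through_ne p₂ l₂ h₂₂, horder]
  have cXp' : Fintype.card {m : L // p₃ ∈ m ∧ m ≠ l₂} = n := by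
    rw [← Nat.card_eq_fintype_card, card_lines_through_ne p₃ l₂ h₃₂, horder]
  have ea : Fin n ≃ {m : L // p₂ ∈ m ∧ m ≠ l₂} := (Fintype.equivFinOfCardEq cXp).symm
  have eb : Fin n ≃ {m : L // p₃ ∈ m ∧ m ≠ l₂} := (Fintype.equivFinOfCardEq cXp').symm
  have hF : ∀ ℓ : {ℓ : L // p₂ ∉ ℓ ∧ p₃ ∉ ℓ}, ∀ m : {m : L // p₂ ∈ m ∧ m ≠ l₂},
      ∃ m' : {m' : L // p₃ ∈ m' ∧ m' ≠ l₂}, ∃ Q : P, Q ∈ ℓ.1 ∧ Q ∈ m.1 ∧ Q ∈ m'.1 := by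
    rintro ⟨ℓ, hℓ₂, hℓ₃⟩ ⟨m, hm₂, hml⟩
    have hne : ℓ ≠ m := fun h => hℓ₂ (h ▸ hm₂)
    obtain ⟨hQℓ, hQm⟩ := Configuration.HasPoints.mkPoint_ax (P := P) hne
    have hQp₃ : Configuration.HasPoints.mkPoint (P := P) hne ≠ p₃ := fun h => hℓ₃ (h ▸ hQℓ)
    obtain ⟨hQm', hp₃m'⟩ := Configuration.HasLines.mkLine_ax (L := L) hQp₃
    refine ⟨⟨Configuration.HasLines.mkLine (L := L) hQp₃, hp₃m', ?_⟩, _, hQℓ, hQm, hQm'⟩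
    intro hl
    have hQl₂ : Configuration.HasPoints.mkPoint (P := P) hne ∈ l₂ := hl ▸ hQm'
    have hQ2 : Configuration.HasPoints.mkPoint (P := P) hne = p₂ :=
      point_eq_of hml hQm hQl₂ hm₂ h₂₂
    exact hℓ₂ (hQ2 ▸ hQℓ)
  choose F Qf hQfℓ hQfm hQfm' using hF
  -- characterization of `F`
  have hkey : ∀ (ℓ' : {ℓ : L // p₂ ∉ ℓ ∧ p₃ ∉ ℓ}) (m : {m : L // p₂ ∈ m ∧ m ≠ l₂})
      (m' : {m' : L // p₃ ∈ m' ∧ m' ≠ l₂}) (Q : P),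
      Q ∈ ℓ'.1 → Q ∈ m.1 → Q ∈ m'.1 → F ℓ' m = m' := by
    intro ℓ' m m' Q hQa hQb hQc
    have hℓm : ℓ'.1 ≠ m.1 := fun h => ℓ'.2.1 (by rw [h]; exact m.2.1)
    have hQeq : Qf ℓ' m = Q := point_eq_of hℓm (hQfℓ ℓ' m) (hQfm ℓ' m) hQa hQb
    have hQp3 : Q ≠ p₃ := fun h => ℓ'.2.2 (h ▸ hQa)
    refine Subtype.ext (line_eq_of hQp3 ?_ (F ℓ' m).2.1 hQc m'.2.1)
    rw [← hQeq]; exact hQfm' ℓ' m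
  have hFinj : ∀ ℓ, Function.Injective (F ℓ) := by
    intro ℓ m m' hmm
    have hℓF : ℓ.1 ≠ (F ℓ m).1 := fun h => ℓ.2.2 (by rw [h]; exact (F ℓ m).2.1)
    have h1 : Qf ℓ m = Qf ℓ m' := by
      refine point_eq_of hℓF (hQfℓ ℓ m) (hQfm' ℓ m) (hQfℓ ℓ m') ?_
      rw [hmm]; exact hQfm' ℓ m'
    have h2 : Qf ℓ m ≠ p₂ := by
      intro h
      have hx := hQfℓ ℓ m
      rw [h] at hx
      exact ℓ.2.1 hx
    refine Subtype.ext (line_eq_of h2 (hQfm ℓ m) m.2.1 ?_ m'.2.1)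
    rw [h1]; exact hQfm ℓ m'
  have hperm : ∀ ℓ, Function.Bijective (fun i => eb.symm (F ℓ (ea i))) := fun ℓ =>
    Finite.injective_iff_bijective.1
      (eb.symm.injective.comp ((hFinj ℓ).comp ea.injective))
  obtain ⟨perm, hpermapp⟩ :
      ∃ perm : {ℓ : L // p₂ ∉ ℓ ∧ p₃ ∉ ℓ} → Equiv.Perm (Fin n),
        ∀ ℓ i, perm ℓ i = eb.symm (F ℓ (ea i)) :=
    ⟨fun ℓ => Equiv.ofBijective _ (hperm ℓ), fun _ _ => rfl⟩
  refine ⟨Set.range perm, ?_⟩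
  intro i1 i2 hi j1 j2 hj
  have hm12 : (ea i1).1 ≠ (ea i2).1 := fun h => hi (ea.injective (Subtype.ext h))
  have hm12' : (eb j1).1 ≠ (eb j2).1 := fun h => hj (eb.injective (Subtype.ext h))
  have hne1 : (ea i1).1 ≠ (eb j1).1 := fun h =>
    (ea i1).2.2 (line_eq_of hp23 (ea i1).2.1 (by rw [h]; exact (eb j1).2.1) h₂₂ h₃₂)
  have hne2 : (ea i2).1 ≠ (eb j2).1 := fun h =>
    (ea i2).2.2 (line_eq_of hp23 (ea i2).2.1 (by rw [h]; exact (eb j2).2.1) h₂₂ h₃₂)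
  obtain ⟨hQ1a, hQ1b⟩ := Configuration.HasPoints.mkPoint_ax (P := P) hne1
  obtain ⟨hQ2a, hQ2b⟩ := Configuration.HasPoints.mkPoint_ax (P := P) hne2
  have hQ1p2 : Configuration.HasPoints.mkPoint (P := P) hne1 ≠ p₂ := fun h =>
    (eb j1).2.2 (line_eq_of hp23 (h ▸ hQ1b) (eb j1).2.1 h₂₂ h₃₂)
  have hQ2p2 : Configuration.HasPoints.mkPoint (P := P) hne2 ≠ p₂ := fun h =>
    (eb j2).2.2 (line_eq_of hp23 (h ▸ hQ2b) (eb j2).2.1 h₂₂ h₃₂)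
  have hQ1p3 : Configuration.HasPoints.mkPoint (P := P) hne1 ≠ p₃ := fun h =>
    (ea i1).2.2 (line_eq_of hp23 (ea i1).2.1 (h ▸ hQ1a) h₂₂ h₃₂)
  have hQ2p3 : Configuration.HasPoints.mkPoint (P := P) hne2 ≠ p₃ := fun h =>
    (ea i2).2.2 (line_eq_of hp23 (ea i2).2.1 (h ▸ hQ2a) h₂₂ h₃₂)
  have hQQ : Configuration.HasPoints.mkPoint (P := P) hne1 ≠
      Configuration.HasPoints.mkPoint (P := P) hne2 := by
    intro h
    exact hQ1p2 (point_eq_of hm12 hQ1a (h.symm ▸ hQ2a) (ea i1).2.1 (ea i2).2.1)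
  obtain ⟨hℓa, hℓb⟩ := Configuration.HasLines.mkLine_ax (L := L) hQQ
  have hp2ℓ : p₂ ∉ Configuration.HasLines.mkLine (L := L) hQQ := by
    intro h
    have e1 := line_eq_of (Ne.symm hQ1p2) h hℓa (ea i1).2.1 hQ1a
    have e2 := line_eq_of (Ne.symm hQ2p2) h hℓb (ea i2).2.1 hQ2a
    exact hm12 (e1 ▸ e2)
  have hp3ℓ : p₃ ∉ Configuration.HasLines.mkLine (L := L) hQQ := by
    intro h
    have e1 := line_eq_of (Ne.symm hQ1p3) h hℓa (eb j1).2.1 hQ1b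
    have e2 := line_eq_of (Ne.symm hQ2p3) h hℓb (eb j2).2.1 hQ2b
    exact hm12' (e1 ▸ e2)
  refine ⟨perm ⟨_, hp2ℓ, hp3ℓ⟩, ⟨Set.mem_range_self _, ?_, ?_⟩, ?_⟩
  · rw [hpermapp, hkey ⟨_, hp2ℓ, hp3ℓ⟩ (ea i1) (eb j1) _ hℓa hQ1a hQ1b,
      Equiv.symm_apply_apply]
  · rw [hpermapp, hkey ⟨_, hp2ℓ, hp3ℓ⟩ (ea i2) (eb j2) _ hℓb hQ2a hQ2b,
      Equiv.symm_apply_apply]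
  · rintro π ⟨⟨ℓ', rfl⟩, hπ1, hπ2⟩
    rw [hpermapp] at hπ1 hπ2
    have hF1 : F ℓ' (ea i1) = eb j1 := by
      rw [← hπ1, Equiv.apply_symm_apply]
    have hF2 : F ℓ' (ea i2) = eb j2 := by
      rw [← hπ2, Equiv.apply_symm_apply]
    have hQf1 : Qf ℓ' (ea i1) = Configuration.HasPoints.mkPoint (P := P) hne1 := by
      refine point_eq_of hne1 (hQfm ℓ' (ea i1)) ?_ hQ1a hQ1b
      rw [← hF1]; exact hQfm' ℓ' (ea i1)
    have hQf2 : Qf ℓ' (ea i2) = Configuration.HasPoints.mkPoint (P := P) hne2 := by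
      refine point_eq_of hne2 (hQfm ℓ' (ea i2)) ?_ hQ2a hQ2b
      rw [← hF2]; exact hQfm' ℓ' (ea i2)
    have hℓeq : ℓ'.1 = Configuration.HasLines.mkLine (L := L) hQQ := by
      refine line_eq_of hQQ ?_ ?_ hℓa hℓb
      · rw [← hQf1]; exact hQfℓ ℓ' (ea i1)
      · rw [← hQf2]; exact hQfℓ ℓ' (ea i2)
    exact congrArg perm (Subtype.ext hℓeq)

/-- An orthogonal array of strength 2, index 1, with `n` columns over an alphabet of
size `n - 1`, from a projective plane of order `n - 1`. -/
private lemma exists_sharp_oa (n : ℕ) (hn : 2 ≤ n) (A : Type*) [Fintype A]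
    (hA : Fintype.card A = n - 1) (h : ExistsProjectivePlaneOfOrder (n - 1)) :
    ∃ G : Set (Fin n → A), ∀ j1 j2 : Fin n, j1 ≠ j2 → ∀ e1 e2 : A,
      ∃! g : Fin n → A, g ∈ G ∧ g j1 = e1 ∧ g j2 = e2 := by
  classical
  obtain ⟨P, L, mem, pp, fP, fL, horder⟩ := h
  letI := mem; letI := pp; haveI := fP; haveI := fL
  obtain ⟨p₁, p₂, p₃, l₁, l₂, l₃, h₁₂, h₁₃, h₂₁, h₂₂, h₂₃, h₃₁, h₃₂, h₃₃⟩ :=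
    @Configuration.ProjectivePlane.exists_config P L _ _
  haveI : Fintype {p : P // p ∈ l₂} := Fintype.ofFinite _
  have cpts : Fintype.card {p : P // p ∈ l₂} = n := by
    rw [← Nat.card_eq_fintype_card, card_points_on_line' l₂, horder]
    omega
  have ep : Fin n ≃ {p : P // p ∈ l₂} := (Fintype.equivFinOfCardEq cpts).symm
  haveI : ∀ j : Fin n, Fintype {m : L // (ep j).1 ∈ m ∧ m ≠ l₂} := fun j => Fintype.ofFinite _
  have cl : ∀ j : Fin n, Fintype.card {m : L // (ep j).1 ∈ m ∧ m ≠ l₂} = Fintype.card A := by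
    intro j
    rw [← Nat.card_eq_fintype_card, card_lines_through_ne (ep j).1 l₂ (ep j).2, horder, hA]
  have sj : ∀ j : Fin n, {m : L // (ep j).1 ∈ m ∧ m ≠ l₂} ≃ A := fun j =>
    Fintype.equivOfCardEq (cl j)
  -- rows
  have hrow : ∀ Q : {Q : P // Q ∉ l₂}, ∀ j : Fin n,
      ∃ m : {m : L // (ep j).1 ∈ m ∧ m ≠ l₂}, Q.1 ∈ m.1 := by
    rintro ⟨Q, hQ⟩ j
    have hne : Q ≠ (ep j).1 := fun h => hQ (h ▸ (ep j).2)
    obtain ⟨hm1, hm2⟩ := Configuration.HasLines.mkLine_ax (L := L) hne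
    exact ⟨⟨Configuration.HasLines.mkLine (L := L) hne, hm2, fun h => hQ (h ▸ hm1)⟩, hm1⟩
  choose row hrowmem using hrow
  have hrowu : ∀ (Q : {Q : P // Q ∉ l₂}) (j : Fin n) (m : {m : L // (ep j).1 ∈ m ∧ m ≠ l₂}),
      Q.1 ∈ m.1 → row Q j = m := by
    intro Q j m hm
    have hne : Q.1 ≠ (ep j).1 := fun h => Q.2 (h ▸ (ep j).2)
    exact Subtype.ext (line_eq_of hne (hrowmem Q j) (row Q j).2.1 hm m.2.1)
  refine ⟨Set.range (fun Q => fun j => sj j (row Q j)), ?_⟩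
  intro j1 j2 hj e1 e2
  have hpt : (ep j1).1 ≠ (ep j2).1 := fun h => hj (ep.injective (Subtype.ext h))
  have hℓℓ : ((sj j1).symm e1).1 ≠ ((sj j2).symm e2).1 := by
    intro h
    refine ((sj j1).symm e1).2.2
      (line_eq_of hpt ((sj j1).symm e1).2.1 ?_ (ep j1).2 (ep j2).2)
    rw [h]; exact ((sj j2).symm e2).2.1
  obtain ⟨hQ1, hQ2⟩ := Configuration.HasPoints.mkPoint_ax (P := P) hℓℓ
  have hQl₂ : Configuration.HasPoints.mkPoint (P := P) hℓℓ ∉ l₂ := by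
    intro h
    have e1' := point_eq_of ((sj j1).symm e1).2.2 hQ1 h ((sj j1).symm e1).2.1 (ep j1).2
    have e2' := point_eq_of ((sj j2).symm e2).2.2 hQ2 h ((sj j2).symm e2).2.1 (ep j2).2
    exact hpt (e1' ▸ e2')
  refine ⟨(fun j => sj j (row ⟨_, hQl₂⟩ j)), ⟨Set.mem_range_self _, ?_, ?_⟩, ?_⟩
  · show sj j1 (row ⟨_, hQl₂⟩ j1) = e1
    rw [hrowu ⟨_, hQl₂⟩ j1 ((sj j1).symm e1) hQ1, Equiv.apply_symm_apply]
  · show sj j2 (row ⟨_, hQl₂⟩ j2) = e2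
    rw [hrowu ⟨_, hQl₂⟩ j2 ((sj j2).symm e2) hQ2, Equiv.apply_symm_apply]
  · rintro g ⟨⟨Q', rfl⟩, hg1, hg2⟩
    have hg1' : sj j1 (row Q' j1) = e1 := hg1
    have hg2' : sj j2 (row Q' j2) = e2 := hg2
    have hr1 : row Q' j1 = (sj j1).symm e1 := by
      rw [← hg1', Equiv.symm_apply_apply]
    have hr2 : row Q' j2 = (sj j2).symm e2 := by
      rw [← hg2', Equiv.symm_apply_apply]
    have hQ'1 : Q'.1 ∈ ((sj j1).symm e1).1 := hr1 ▸ hrowmem Q' j1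
    have hQ'2 : Q'.1 ∈ ((sj j2).symm e2).1 := hr2 ▸ hrowmem Q' j2
    have hQ'eq : Q'.1 = Configuration.HasPoints.mkPoint (P := P) hℓℓ :=
      point_eq_of hℓℓ hQ'1 hQ'2 hQ1 hQ2
    have hQ' : Q' = ⟨_, hQl₂⟩ := Subtype.ext hQ'eq
    rw [hQ']

/-- **Application to projective planes.**
Let `n ≥ 2`.  If there exist a projective plane of order `n-1` and a projective plane of
order `n`, then there exists a `2`-design of index 1 in `C_{n-1} ≀ Sₙ`.  (Equivalently:
if there is no `2`-design of index 1 in `C_{n-1} ≀ Sₙ`, then there is no projective plane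
of order `n-1` or none of order `n`.) -/
theorem projective_planes_give_sharp_two_design (n : ℕ) (hn : 2 ≤ n)
    (h1 : ExistsProjectivePlaneOfOrder (n - 1))
    (h2 : ExistsProjectivePlaneOfOrder n) :
    ∃ Y : Set (Wr (Multiplicative (ZMod (n - 1))) n), IsSharpTDesign (n - 1) n 2 Y := by
  classical
  haveI : NeZero (n - 1) := ⟨by omega⟩
  have hcard : Fintype.card (Multiplicative (ZMod (n - 1))) = n - 1 := by
    rw [Fintype.card_multiplicative, ZMod.card]
  obtain ⟨G, hG⟩ := exists_sharp_oa n hn (Multiplicative (ZMod (n - 1))) hcard h1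
  obtain ⟨S, hS⟩ := exists_sharp_perms n h2
  refine ⟨{w | w.left ∈ G ∧ w.right ∈ S}, ?_⟩
  intro a ha b hb
  have hi : (a 0).2 ≠ (a 1).2 := fun h => absurd (ha h) (by decide)
  have hj : (b 0).2 ≠ (b 1).2 := fun h => absurd (hb h) (by decide)
  obtain ⟨π, ⟨hπS, hπ1, hπ2⟩, hπu⟩ := hS _ _ hi _ _ hj
  obtain ⟨g, ⟨hgG, hg1, hg2⟩, hgu⟩ := hG _ _ hj ((a 0).1⁻¹ * (b 0).1) ((a 1).1⁻¹ * (b 1).1)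
  -- a characterization of the design condition
  have hchar : ∀ y : Wr (Multiplicative (ZMod (n - 1))) n,
      ((fun s => wAct y (a s)) = b) ↔
        (y.right (a 0).2 = (b 0).2 ∧ y.right (a 1).2 = (b 1).2 ∧
         y.left (b 0).2 = (a 0).1⁻¹ * (b 0).1 ∧ y.left (b 1).2 = (a 1).1⁻¹ * (b 1).1) := by
    intro y
    constructor
    · intro hy
      have h0 := congrFun hy 0
      have h1' := congrFun hy 1
      have s0 : y.right (a 0).2 = (b 0).2 := congrArg Prod.snd h0
      have s1 : y.right (a 1).2 = (b 1).2 := congrArg Prod.snd h1'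
      have f0 : (a 0).1 * y.left (y.right (a 0).2) = (b 0).1 := congrArg Prod.fst h0
      have f1 : (a 1).1 * y.left (y.right (a 1).2) = (b 1).1 := congrArg Prod.fst h1'
      rw [s0] at f0
      rw [s1] at f1
      exact ⟨s0, s1, by rw [← f0, inv_mul_cancel_left], by rw [← f1, inv_mul_cancel_left]⟩
    · rintro ⟨s0, s1, f0, f1⟩
      funext s
      match s with
      | 0 =>
        show ((a 0).1 * y.left (y.right (a 0).2), y.right (a 0).2) = b 0
        rw [s0, f0, mul_inv_cancel_left]
      | 1 =>
        show ((a 1).1 * y.left (y.right (a 1).2), y.right (a 1).2) = b 1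
        rw [s1, f1, mul_inv_cancel_left]
  rw [Nat.card_eq_one_iff_unique]
  constructor
  · constructor
    rintro ⟨y, ⟨hyG, hyS⟩, hy⟩ ⟨z, ⟨hzG, hzS⟩, hz⟩
    obtain ⟨ys0, ys1, yf0, yf1⟩ := (hchar y).1 hy
    obtain ⟨zs0, zs1, zf0, zf1⟩ := (hchar z).1 hz
    have hyr : y.right = π := hπu y.right ⟨hyS, ys0, ys1⟩
    have hzr : z.right = π := hπu z.right ⟨hzS, zs0, zs1⟩
    have hyl : y.left = g := hgu y.left ⟨hyG, yf0, yf1⟩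
    have hzl : z.left = g := hgu z.left ⟨hzG, zf0, zf1⟩
    apply Subtype.ext
    exact SemidirectProduct.ext (by rw [hyl, hzl]) (by rw [hyr, hzr])
  · refine ⟨⟨⟨g, π⟩, ⟨hgG, hπS⟩, ?_⟩⟩
    rw [hchar]
    exact ⟨hπ1, hπ2, hg1, hg2⟩
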